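/- arXiv:2502.19251 — 12 statements merged into one kernel-verified Lean document; each statement's English description precedes it below -/
import Mathlib

section
/- Let d₁, d₂, p₁, p₂ be real numbers with d₁ > 0, d₂ > 0, p₂ > 0, p₁ > 0 and p₁ + p₂ ≤ d₁, and define r₁(λ) = (2d₁ − p₁ − 2p₂)/(4d₁) + (p₂/(4d₁))λ² and r₂(λ) = −1/2 − (p₂/(2d₂))λ. Then for real numbers t₁, t₂ there exists λ > 0 with r₁(λ) = t₁ and r₂(λ) = t₂ if and only if t₂ < −1/2 and t₁ = (d₂²/(d₁p₂))t₂² + (d₂²/(d₁p₂))t₂ + (p₂(2d₁ − p₁ − 2p₂) + d₂²)/(4d₁p₂). -/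
theorem stmt_0 (d₁ d₂ p₁ p₂ : ℝ) (hd₁ : 0 < d₁) (hd₂ : 0 < d₂) (hp₂ : 0 < p₂)
    (hp₁ : 0 < p₁) (hsum : p₁ + p₂ ≤ d₁)
    (r₁ r₂ : ℝ → ℝ)
    (hr₁ : ∀ l : ℝ, r₁ l = (2*d₁ - p₁ - 2*p₂)/(4*d₁) + (p₂/(4*d₁))*l^2)
    (hr₂ : ∀ l : ℝ, r₂ l = -1/2 - (p₂/(2*d₂))*l)
    (t₁ t₂ : ℝ) :
    (∃ l : ℝ, 0 < l ∧ r₁ l = t₁ ∧ r₂ l = t₂) ↔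
      (t₂ < -1/2 ∧
        t₁ = (d₂^2/(d₁*p₂))*t₂^2 + (d₂^2/(d₁*p₂))*t₂ +
          (p₂*(2*d₁ - p₁ - 2*p₂) + d₂^2)/(4*d₁*p₂)) := by
  constructor
  · rintro ⟨l, hl, h1, h2⟩
    rw [hr₁] at h1
    rw [hr₂] at h2
    constructor
    · rw [← h2]
      have : 0 < (p₂/(2*d₂))*l := by positivity
      linarith
    · subst h1
      have h2' : l = -(2*d₂/p₂)*(t₂ + 1/2) := by
        field_simp at h2 ⊢
        linarith
      subst h2'
      field_simp
      ring
  · rintro ⟨h2, h1⟩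
    refine ⟨-(2*d₂/p₂)*(t₂ + 1/2), ?_, ?_, ?_⟩
    · have : t₂ + 1/2 < 0 := by linarith
      have : 0 < -(t₂ + 1/2) := by linarith
      have h : 0 < (2*d₂/p₂) * -(t₂ + 1/2) := by positivity
      linarith [h]
    · rw [hr₁, h1]
      field_simp
      ring
    · rw [hr₂]
      field_simp
      ring
end

section
/- Let d₁, d₂, p₁, p₂ be real numbers with d₁ > 0, d₂ > 0, p₂ > 0, p₁ > 0 and p₁ + p₂ ≤ d₁, and define r₁(λ) = (2d₁ − p₁ − 2p₂)/(4d₁) + (p₂/(4d₁))λ² and r₂(λ) = −1/2 − (p₂/(2d₂))λ. Then for real numbers t₁, t₂ there exist c > 0 and λ > 0 with r₁(λ) = c·t₁ and r₂(λ) = c·t₂ if and only if t₁ > 0, t₂ < 0, and t₁/t₂ ≤ d₂²/(d₁p₂) − (d₂/d₁)·√(d₂²/p₂² + (2d₁ − p₁ − 2p₂)/p₂). -/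
/-!
Write `r₁ l = A + B l²` and `r₂ l = -1/2 - C l` with `A, B, C > 0`. Along `l > 0` we have
`r₁ > 0 > r₂`, so a solution forces `t₁ > 0 > t₂`, and the question is which negative ratios
`s = t₁ / t₂` are attained by `r₁ / r₂`. The equation `r₁ l = s r₂ l` is the quadratic
`B l² + sC l + (A + s/2) = 0`, whose roots have positive sum `-sC/B`; so it has a positive root
exactly when its discriminant `C²s² - 2Bs - 4AB` is nonnegative, i.e. when `s` lies below the
negative root of that discriminant.
-/

namespace RicciRatio

variable {A B C : ℝ}

/-- The negative root of `s ↦ C²s² - 2Bs - 4AB`, the discriminant of `B l² + sC l + (A + s/2)`. -/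
noncomputable def ratioMax (A B C : ℝ) : ℝ := (B - √(B ^ 2 + 4 * A * B * C ^ 2)) / C ^ 2

lemma discrim_eq (s : ℝ) :
    discrim B (s * C) (A + s / 2) = C ^ 2 * s ^ 2 - 2 * B * s - 4 * A * B := by
  rw [discrim]; ring

lemma le_ratioMax_iff (hB : 0 < B) (hC : C ≠ 0) {s : ℝ} (hs : s < 0) :
    s ≤ ratioMax A B C ↔ 0 ≤ discrim B (s * C) (A + s / 2) := by
  have hC2 : 0 < C ^ 2 := by positivity
  have hpos : 0 ≤ B - s * C ^ 2 := by nlinarith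
  rw [ratioMax, le_div_iff₀ hC2, le_sub_comm, Real.sqrt_le_left hpos, discrim_eq]
  constructor <;> intro h <;> nlinarith

lemma exists_pos_root_iff (hB : 0 < B) (hC : 0 < C) {s : ℝ} (hs : s < 0) :
    (∃ l, 0 < l ∧ A + B * l ^ 2 = s * (-1 / 2 - C * l)) ↔
      0 ≤ discrim B (s * C) (A + s / 2) := by
  have hquad (l : ℝ) : A + B * l ^ 2 = s * (-1 / 2 - C * l) ↔
      B * (l * l) + s * C * l + (A + s / 2) = 0 := by
    constructor <;> intro h <;> linarith
  simp only [hquad]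
  constructor
  · rintro ⟨l, -, hl⟩
    rw [discrim_eq_sq_of_quadratic_eq_zero hl]
    positivity
  · intro hD
    set D := discrim B (s * C) (A + s / 2)
    refine ⟨(-(s * C) + √D) / (2 * B), ?_,
      (quadratic_eq_zero_iff hB.ne' (Real.mul_self_sqrt hD).symm _).mpr (Or.inl rfl)⟩
    have : 0 < -(s * C) := by nlinarith
    positivity

theorem exists_ratio_iff (hA : 0 < A) (hB : 0 < B) (hC : 0 < C) (t₁ t₂ : ℝ) :
    (∃ c l : ℝ, 0 < c ∧ 0 < l ∧ A + B * l ^ 2 = c * t₁ ∧ -1 / 2 - C * l = c * t₂) ↔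
      0 < t₁ ∧ t₂ < 0 ∧ t₁ / t₂ ≤ ratioMax A B C := by
  constructor
  · rintro ⟨c, l, hc, hl, h₁, h₂⟩
    have ht₁ : 0 < t₁ := pos_of_mul_pos_right (h₁ ▸ by positivity) hc.le
    have ht₂ : t₂ < 0 := neg_of_mul_neg_right (h₂ ▸ by nlinarith) hc.le
    have hs := div_neg_of_pos_of_neg ht₁ ht₂
    refine ⟨ht₁, ht₂, (le_ratioMax_iff hB hC.ne' hs).mpr ?_⟩
    refine (exists_pos_root_iff hB hC hs).mp ⟨l, hl, ?_⟩
    rw [h₁, h₂]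
    field_simp [ht₂.ne]
  · rintro ⟨ht₁, ht₂, hle⟩
    have hs := div_neg_of_pos_of_neg ht₁ ht₂
    obtain ⟨l, hl, hroot⟩ :=
      (exists_pos_root_iff hB hC hs).mpr ((le_ratioMax_iff hB hC.ne' hs).mp hle)
    refine ⟨(-1 / 2 - C * l) / t₂, l, div_pos_of_neg_of_neg (by nlinarith) ht₂, hl, ?_, ?_⟩
    · rw [hroot]; field_simp [ht₂.ne]
    · field_simp [ht₂.ne]

lemma ratioMax_eq (d₁ d₂ p₂ E : ℝ) (hd₁ : 0 < d₁) (hd₂ : 0 < d₂) (hp₂ : 0 < p₂) :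
    ratioMax (E / (4 * d₁)) (p₂ / (4 * d₁)) (p₂ / (2 * d₂)) =
      d₂ ^ 2 / (d₁ * p₂) - (d₂ / d₁) * √(d₂ ^ 2 / p₂ ^ 2 + E / p₂) := by
  have hrad : (p₂ / (4 * d₁)) ^ 2 + 4 * (E / (4 * d₁)) * (p₂ / (4 * d₁)) * (p₂ / (2 * d₂)) ^ 2 =
      ((p₂ / (2 * d₂)) ^ 2 * (d₂ / d₁)) ^ 2 * (d₂ ^ 2 / p₂ ^ 2 + E / p₂) := by
    field_simp; ring
  rw [ratioMax, hrad, Real.sqrt_mul (sq_nonneg _), Real.sqrt_sq (by positivity)]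
  field_simp
  ring

end RicciRatio

theorem stmt_1 (d₁ d₂ p₁ p₂ : ℝ) (hd₁ : 0 < d₁) (hd₂ : 0 < d₂) (hp₂ : 0 < p₂)
    (hp₁ : 0 < p₁) (hsum : p₁ + p₂ ≤ d₁)
    (r₁ r₂ : ℝ → ℝ)
    (hr₁ : ∀ l : ℝ, r₁ l = (2*d₁ - p₁ - 2*p₂)/(4*d₁) + (p₂/(4*d₁))*l^2)
    (hr₂ : ∀ l : ℝ, r₂ l = -1/2 - (p₂/(2*d₂))*l)
    (t₁ t₂ : ℝ) :
    (∃ c l : ℝ, 0 < c ∧ 0 < l ∧ r₁ l = c * t₁ ∧ r₂ l = c * t₂) ↔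
      (0 < t₁ ∧ t₂ < 0 ∧
        t₁/t₂ ≤ d₂^2/(d₁*p₂) -
          (d₂/d₁) * Real.sqrt (d₂^2/p₂^2 + (2*d₁ - p₁ - 2*p₂)/p₂)) := by
  have hE : 0 < 2 * d₁ - p₁ - 2 * p₂ := by linarith
  simp only [hr₁, hr₂]
  rw [← RicciRatio.ratioMax_eq d₁ d₂ p₂ _ hd₁ hd₂ hp₂]
  exact RicciRatio.exists_ratio_iff (by positivity) (by positivity) (by positivity) t₁ t₂
end

section
/- Let d₁, d₂, p₁, p₂ be real numbers with d₁ > 0, d₂ > 0, p₂ > 0, p₁ > 0 and p₁ + p₂ ≤ d₁, and define r₁(λ) = (2d₁ − p₁ − 2p₂)/(4d₁) + (p₂/(4d₁))λ² and r₂(λ) = −1/2 − (p₂/(2d₂))λ. Let t₁ > 0 and t₂ < 0 be real numbers. Then there exist pairs (c, λ) and (c′, λ′) with c, c′, λ, λ′ > 0, c ≠ c′, r₁(λ) = c·t₁, r₂(λ) = c·t₂, r₁(λ′) = c′·t₁ and r₂(λ′) = c′·t₂ if and only if −(2d₁ − p₁ − 2p₂)/(2d₁) < t₁/t₂ < d₂²/(d₁p₂)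 − (d₂/d₁)·√(d₂²/p₂² + (2d₁ − p₁ − 2p₂)/p₂). -/
/-!
Put `s = t₁ / t₂ < 0`. For `λ > 0` we have `r₂ λ < 0`, so a solution `(c, λ)` is the same as a
positive root of `r₁ = s · r₂` together with `c = r₂ λ / t₂ > 0`, and distinct `c` correspond to
distinct `λ`. After clearing denominators, `r₁ = s · r₂` is the quadratic
`p₂ d₂ λ² + 2 d₁ p₂ s λ + d₂ (2d₁ - p₁ - 2p₂ + 2 d₁ s) = 0`, whose roots have positive sum.
It has two distinct positive roots iff its constant term is positive (the left inequality) and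
its discriminant `(2 d₁ p₂)² ((M - s)² - W²)` is positive, where `M - W` is the right-hand bound
with `M = d₂² / (d₁ p₂)`; as `s < 0 < M`, the latter means `s < M - W`.
-/

theorem exists_ne_pos_roots_iff {a b c : ℝ} (ha : 0 < a) :
    (∃ x y, x ≠ y ∧ 0 < x ∧ 0 < y ∧
        a * (x * x) + b * x + c = 0 ∧ a * (y * y) + b * y + c = 0) ↔
      0 < discrim a b c ∧ b < 0 ∧ 0 < c := by
  constructor
  · rintro ⟨x, y, hxy, hx, hy, hqx, hqy⟩
    have hsum : a * (x + y) + b = 0 := by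
      have : (x - y) * (a * (x + y) + b) = 0 := by linear_combination hqx - hqy
      exact (mul_eq_zero.mp this).resolve_left (sub_ne_zero.mpr hxy)
    have hprod : a * (x * y) = c := by linear_combination y * hsum - hqy
    refine ⟨?_, ?_, hprod ▸ by positivity⟩
    · rw [discrim_eq_sq_of_quadratic_eq_zero hqx,
        show 2 * a * x + b = a * (x - y) by linear_combination hsum]
      exact pow_two_pos_of_ne_zero (mul_ne_zero ha.ne' (sub_ne_zero.mpr hxy))
    · nlinarith [mul_pos ha (add_pos hx hy)]
  · rintro ⟨hD, hb, hc⟩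
    set s := √(discrim a b c)
    have hs : discrim a b c = s * s := (Real.mul_self_sqrt hD.le).symm
    have hs_pos : 0 < s := Real.sqrt_pos.mpr hD
    -- `discrim a b c < b ^ 2` because `0 < a * c`
    have hs_lt : s < -b := by
      rw [Real.sqrt_lt' (by linarith), discrim]
      nlinarith [mul_pos ha hc]
    have h2a : 0 < 2 * a := by positivity
    refine ⟨(-b + s) / (2 * a), (-b - s) / (2 * a), ?_, div_pos (by linarith) h2a,
      div_pos (by linarith) h2a, (quadratic_eq_zero_iff ha.ne' hs _).mpr (Or.inl rfl),
      (quadratic_eq_zero_iff ha.ne' hs _).mpr (Or.inr rfl)⟩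
    rw [Ne, div_left_inj' h2a.ne']
    linarith

theorem exists_two_proportional_iff {f g : ℝ → ℝ} {t₁ t₂ : ℝ} (ht₂ : t₂ ≠ 0)
    (hg : Set.InjOn g (Set.Ioi 0)) (hpos : ∀ l, 0 < l → 0 < g l / t₂) :
    (∃ c l c' l' : ℝ, 0 < c ∧ 0 < c' ∧ 0 < l ∧ 0 < l' ∧ c ≠ c' ∧
        f l = c * t₁ ∧ g l = c * t₂ ∧ f l' = c' * t₁ ∧ g l' = c' * t₂) ↔
      ∃ l l', l ≠ l' ∧ 0 < l ∧ 0 < l' ∧ f l * t₂ = g l * t₁ ∧ f l' * t₂ = g l' * t₁ := by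
  constructor
  · rintro ⟨c, l, c', l', -, -, hl, hl', hcc', hf, hg, hf', hg'⟩
    refine ⟨l, l', ?_, hl, hl', by rw [hf, hg]; ring, by rw [hf', hg']; ring⟩
    rintro rfl
    exact hcc' (mul_right_cancel₀ ht₂ (hg ▸ hg'))
  · rintro ⟨l, l', hll', hl, hl', hf, hf'⟩
    refine ⟨g l / t₂, l, g l' / t₂, l', hpos l hl, hpos l' hl', hl, hl', ?_,
      ?_, (div_mul_cancel₀ _ ht₂).symm, ?_, (div_mul_cancel₀ _ ht₂).symm⟩
    · rw [Ne, div_left_inj' ht₂]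
      exact fun h => hll' (hg hl hl' h)
    · field_simp; linarith
    · field_simp; linarith

theorem ricci_proportional_iff {d₁ d₂ p₂ q t₁ t₂ : ℝ} (hd₁ : d₁ ≠ 0) (hd₂ : d₂ ≠ 0)
    (ht₂ : t₂ ≠ 0) (l : ℝ) :
    (q / (4 * d₁) + (p₂ / (4 * d₁)) * l ^ 2) * t₂ = (-1 / 2 - (p₂ / (2 * d₂)) * l) * t₁ ↔
      p₂ * d₂ * (l * l) + 2 * d₁ * p₂ * (t₁ / t₂) * l + d₂ * (q + 2 * d₁ * (t₁ / t₂)) = 0 := by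
  have key : (q / (4 * d₁) + (p₂ / (4 * d₁)) * l ^ 2) * t₂ - (-1 / 2 - (p₂ / (2 * d₂)) * l) * t₁
      = t₂ / (4 * d₁ * d₂) *
        (p₂ * d₂ * (l * l) + 2 * d₁ * p₂ * (t₁ / t₂) * l + d₂ * (q + 2 * d₁ * (t₁ / t₂))) := by
    field_simp
    ring
  rw [← sub_eq_zero, key, mul_eq_zero, or_iff_right (by positivity)]

theorem ricci_discrim_pos_iff {d₁ d₂ p₂ q s : ℝ} (hd₁ : 0 < d₁) (hd₂ : 0 < d₂) (hp₂ : 0 < p₂)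
    (hq : 0 ≤ q) (hs : s ≤ 0) :
    0 < discrim (p₂ * d₂) (2 * d₁ * p₂ * s) (d₂ * (q + 2 * d₁ * s)) ↔
      s < d₂ ^ 2 / (d₁ * p₂) - (d₂ / d₁) * √(d₂ ^ 2 / p₂ ^ 2 + q / p₂) := by
  set M := d₂ ^ 2 / (d₁ * p₂)
  set W := (d₂ / d₁) * √(d₂ ^ 2 / p₂ ^ 2 + q / p₂)
  have hdisc : discrim (p₂ * d₂) (2 * d₁ * p₂ * s) (d₂ * (q + 2 * d₁ * s))
      = (2 * d₁ * p₂) ^ 2 * ((M - s) ^ 2 - W ^ 2) := by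
    simp only [discrim, M, W, mul_pow, Real.sq_sqrt (by positivity : 0 ≤ d₂ ^ 2 / p₂ ^ 2 + q / p₂)]
    field_simp
    ring
  rw [hdisc, mul_pos_iff_of_pos_left (by positivity), sub_pos,
    sq_lt_sq₀ (by positivity) (by linarith [show 0 < M by positivity]), lt_sub_comm]

theorem stmt_2_general (d₁ d₂ p₁ p₂ : ℝ) (hd₁ : 0 < d₁) (hd₂ : 0 < d₂) (hp₂ : 0 < p₂)
    (r₁ r₂ : ℝ → ℝ)
    (hr₁ : ∀ l : ℝ, r₁ l = (2*d₁ - p₁ - 2*p₂)/(4*d₁) + (p₂/(4*d₁))*l^2)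
    (hr₂ : ∀ l : ℝ, r₂ l = -1/2 - (p₂/(2*d₂))*l)
    (t₁ t₂ : ℝ) (ht₁ : 0 < t₁) (ht₂ : t₂ < 0) :
    (∃ c l c' l' : ℝ, 0 < c ∧ 0 < c' ∧ 0 < l ∧ 0 < l' ∧ c ≠ c' ∧
        r₁ l = c * t₁ ∧ r₂ l = c * t₂ ∧ r₁ l' = c' * t₁ ∧ r₂ l' = c' * t₂) ↔
      (-(2*d₁ - p₁ - 2*p₂)/(2*d₁) < t₁/t₂ ∧
        t₁/t₂ < d₂^2/(d₁*p₂) -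
          (d₂/d₁) * Real.sqrt (d₂^2/p₂^2 + (2*d₁ - p₁ - 2*p₂)/p₂)) := by
  have hr₂_inj : Set.InjOn r₂ (Set.Ioi 0) := fun x _ y _ h => by
    rw [hr₂, hr₂] at h
    exact mul_left_cancel₀ (a := p₂ / (2 * d₂)) (by positivity) (by linarith)
  have hr₂_div_pos : ∀ l, 0 < l → 0 < r₂ l / t₂ := fun l hl =>
    div_pos_of_neg_of_neg (by rw [hr₂]; linarith [show 0 < p₂ / (2 * d₂) * l by positivity]) ht₂
  have hs : t₁ / t₂ < 0 := div_neg_of_pos_of_neg ht₁ ht₂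
  have hc : 0 < d₂ * (2*d₁ - p₁ - 2*p₂ + 2 * d₁ * (t₁ / t₂)) ↔
      -(2*d₁ - p₁ - 2*p₂)/(2*d₁) < t₁/t₂ := by
    rw [mul_pos_iff_of_pos_left hd₂, div_lt_iff₀ (by positivity)]
    constructor <;> intro <;> linarith
  rw [exists_two_proportional_iff ht₂.ne hr₂_inj hr₂_div_pos]
  simp only [hr₁, hr₂, ricci_proportional_iff hd₁.ne' hd₂.ne' ht₂.ne]
  have hb : 2 * d₁ * p₂ * (t₁ / t₂) < 0 := mul_neg_of_pos_of_neg (by positivity) hs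
  rw [exists_ne_pos_roots_iff (by positivity), and_iff_right hb, and_comm, ← hc]
  refine and_congr_right fun hcpos => ricci_discrim_pos_iff hd₁ hd₂ hp₂ ?_ hs.le
  linarith [pos_of_mul_pos_right hcpos hd₂.le, mul_neg_of_pos_of_neg hd₁ hs]

theorem stmt_2 (d₁ d₂ p₁ p₂ : ℝ) (hd₁ : 0 < d₁) (hd₂ : 0 < d₂) (hp₂ : 0 < p₂)
    (hp₁ : 0 < p₁) (hsum : p₁ + p₂ ≤ d₁)
    (r₁ r₂ : ℝ → ℝ)
    (hr₁ : ∀ l : ℝ, r₁ l = (2*d₁ - p₁ - 2*p₂)/(4*d₁) + (p₂/(4*d₁))*l^2)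
    (hr₂ : ∀ l : ℝ, r₂ l = -1/2 - (p₂/(2*d₂))*l)
    (t₁ t₂ : ℝ) (ht₁ : 0 < t₁) (ht₂ : t₂ < 0) :
    (∃ c l c' l' : ℝ, 0 < c ∧ 0 < c' ∧ 0 < l ∧ 0 < l' ∧ c ≠ c' ∧
        r₁ l = c * t₁ ∧ r₂ l = c * t₂ ∧ r₁ l' = c' * t₁ ∧ r₂ l' = c' * t₂) ↔
      (-(2*d₁ - p₁ - 2*p₂)/(2*d₁) < t₁/t₂ ∧
        t₁/t₂ < d₂^2/(d₁*p₂) -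
          (d₂/d₁) * Real.sqrt (d₂^2/p₂^2 + (2*d₁ - p₁ - 2*p₂)/p₂)) :=
  stmt_2_general d₁ d₂ p₁ p₂ hd₁ hd₂ hp₂ r₁ r₂ hr₁ hr₂ t₁ t₂ ht₁ ht₂
end

section
/- Let d₁, d₂, p₁, p₂ be real numbers with d₁ > 0, d₂ > 0, p₂ > 0, p₁ ≥ 0 and p₁ + p₂ ≤ d₁, and let t₁ > 0, t₂ < 0 be real numbers. Then every real root c of the quadratic polynomial q(c) = (d₂²/(d₁p₂))t₂²·c² + (d₂²/(d₁p₂)·t₂ − t₁)·c + d₂²/(4p₂d₁) + (2d₁ − p₁ − 2p₂)/(4d₁) is positive. -/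
theorem stmt_4 (d₁ d₂ p₁ p₂ : ℝ) (hd₁ : 0 < d₁) (hd₂ : 0 < d₂) (hp₂ : 0 < p₂)
    (hp₁ : 0 ≤ p₁) (hsum : p₁ + p₂ ≤ d₁)
    (t₁ t₂ : ℝ) (ht₁ : 0 < t₁) (ht₂ : t₂ < 0) :
    ∀ c : ℝ,
      (d₂^2/(d₁*p₂)) * t₂^2 * c^2 + (d₂^2/(d₁*p₂) * t₂ - t₁) * c +
        d₂^2/(4*p₂*d₁) + (2*d₁ - p₁ - 2*p₂)/(4*d₁) = 0 →
      0 < c := by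
  intro c h
  by_contra hc
  push_neg at hc
  have hA : 0 < d₂^2/(d₁*p₂) := by positivity
  have hC1 : 0 < d₂^2/(4*p₂*d₁) := by positivity
  have hC2 : 0 ≤ (2*d₁ - p₁ - 2*p₂)/(4*d₁) := by
    apply div_nonneg _ (by linarith)
    linarith
  nlinarith [mul_nonneg hA.le (mul_nonneg (sq_nonneg t₂) (sq_nonneg c)),
    mul_nonneg (mul_nonneg hA.le (neg_nonneg.2 ht₂.le)) (neg_nonneg.2 hc),
    mul_nonneg ht₁.le (neg_nonneg.2 hc)]
end

section
/- Let d₁, d₂, p₁, p₂ be real numbers with d₁ > 0, d₂ > 0, p₂ > 0, p₁ > 0 and p₁ + p₂ ≤ d₁, and let t₁ > 0, t₂ < 0 be real numbers. Then the discriminant (d₂²/(d₁p₂)·t₂ − t₁)² − 4·(d₂²/(d₁p₂)·t₂²)·(d₂²/(4p₂d₁) + (2d₁ − p₁ − 2p₂)/(4d₁)) is nonnegative if and only if t₁/t₂ ≤ d₂²/(d₁p₂) − (d₂/d₁)·√(d₂²/p₂² + (2d₁ − p₁ − 2p₂)/p₂); moreover this quantity d₂²/(d₁p₂) − (d₂/d₁)·√(d₂²/p₂²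 + (2d₁ − p₁ − 2p₂)/p₂) is negative. -/
/-!
Write `a = d₂²/(d₁p₂)` and `B = (d₂/d₁)·√(d₂²/p₂² + (2d₁ - p₁ - 2p₂)/p₂)`. The constant term of the
quadratic is chosen so that the subtracted term of the discriminant is exactly `(B t₂)²`, so the
discriminant is `(a t₂ - t₁)² - (B t₂)²`, a difference of squares of two nonpositive numbers; it is
nonnegative iff `a t₂ - t₁ ≤ B t₂`, i.e. iff `t₁/t₂ ≤ a - B`. Since `a = (d₂/d₁)·(d₂/p₂)` and
`2d₁ - p₁ - 2p₂ ≥ p₁ > 0`, the square root exceeds `d₂/p₂`, whence `a < B`.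
-/

lemma sq_le_sq_iff_le_of_nonpos {R : Type*} [Ring R] [LinearOrder R] [IsStrictOrderedRing R]
    {x y : R} (hx : x ≤ 0) (hy : y ≤ 0) : y ^ 2 ≤ x ^ 2 ↔ x ≤ y := by
  rw [← neg_sq y, ← neg_sq x, sq_le_sq₀ (neg_nonneg.2 hy) (neg_nonneg.2 hx), neg_le_neg_iff]

lemma difference_of_squares_nonneg_iff_div_le {a B t₁ t₂ : ℝ} (ha : 0 ≤ a) (hB : 0 ≤ B)
    (ht₁ : 0 ≤ t₁) (ht₂ : t₂ < 0) :
    0 ≤ (a * t₂ - t₁) ^ 2 - (B * t₂) ^ 2 ↔ t₁ / t₂ ≤ a - B := by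
  have hat : a * t₂ - t₁ ≤ 0 := by nlinarith
  have hBt : B * t₂ ≤ 0 := mul_nonpos_of_nonneg_of_nonpos hB ht₂.le
  rw [sub_nonneg, sq_le_sq_iff_le_of_nonpos hat hBt, div_le_iff_of_neg ht₂, sub_mul]
  constructor <;> intro h <;> linarith

section

variable {d₁ d₂ p₁ p₂ : ℝ}

lemma sq_div_mul_sqrt_eq (hd₁ : d₁ ≠ 0) (hp₂ : 0 < p₂) (hE : 0 ≤ 2*d₁ - p₁ - 2*p₂) :
    ((d₂/d₁) * Real.sqrt (d₂^2/p₂^2 + (2*d₁ - p₁ - 2*p₂)/p₂)) ^ 2 =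
      4 * (d₂^2/(d₁*p₂)) * (d₂^2/(4*p₂*d₁) + (2*d₁ - p₁ - 2*p₂)/(4*d₁)) := by
  rw [mul_pow, Real.sq_sqrt (by positivity)]
  field_simp

lemma lt_div_mul_sqrt (hd₁ : 0 < d₁) (hd₂ : 0 < d₂) (hp₂ : 0 < p₂)
    (hE : 0 < 2*d₁ - p₁ - 2*p₂) :
    d₂^2/(d₁*p₂) < (d₂/d₁) * Real.sqrt (d₂^2/p₂^2 + (2*d₁ - p₁ - 2*p₂)/p₂) := by
  have hsqrt : d₂/p₂ < Real.sqrt (d₂^2/p₂^2 + (2*d₁ - p₁ - 2*p₂)/p₂) := by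
    rw [Real.lt_sqrt (by positivity), div_pow]
    exact lt_add_of_pos_right _ (div_pos hE hp₂)
  calc d₂^2/(d₁*p₂) = (d₂/d₁) * (d₂/p₂) := by field_simp
    _ < _ := mul_lt_mul_of_pos_left hsqrt (div_pos hd₂ hd₁)

end

theorem stmt_5 (d₁ d₂ p₁ p₂ : ℝ) (hd₁ : 0 < d₁) (hd₂ : 0 < d₂) (hp₂ : 0 < p₂)
    (hp₁ : 0 < p₁) (hsum : p₁ + p₂ ≤ d₁)
    (t₁ t₂ : ℝ) (ht₁ : 0 < t₁) (ht₂ : t₂ < 0) :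
    (0 ≤ (d₂^2/(d₁*p₂) * t₂ - t₁)^2 -
        4 * (d₂^2/(d₁*p₂) * t₂^2) *
          (d₂^2/(4*p₂*d₁) + (2*d₁ - p₁ - 2*p₂)/(4*d₁)) ↔
      t₁/t₂ ≤ d₂^2/(d₁*p₂) -
        (d₂/d₁) * Real.sqrt (d₂^2/p₂^2 + (2*d₁ - p₁ - 2*p₂)/p₂)) ∧
    d₂^2/(d₁*p₂) -
        (d₂/d₁) * Real.sqrt (d₂^2/p₂^2 + (2*d₁ - p₁ - 2*p₂)/p₂) < 0 := by
  have hE : 0 < 2*d₁ - p₁ - 2*p₂ := by linarith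
  refine ⟨?_, sub_neg.2 (lt_div_mul_sqrt hd₁ hd₂ hp₂ hE)⟩
  have hdisc : 4 * (d₂^2/(d₁*p₂) * t₂^2) * (d₂^2/(4*p₂*d₁) + (2*d₁ - p₁ - 2*p₂)/(4*d₁)) =
      ((d₂/d₁) * Real.sqrt (d₂^2/p₂^2 + (2*d₁ - p₁ - 2*p₂)/p₂) * t₂) ^ 2 := by
    rw [mul_pow, sq_div_mul_sqrt_eq hd₁.ne' hp₂ hE.le]
    ring
  rw [hdisc]
  exact difference_of_squares_nonneg_iff_div_le (by positivity) (by positivity) ht₁.le ht₂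
end

section
/- Let d₁, d₂, p₂ be real numbers with d₁ > 0, d₂ > 0, 0 < p₂ < d₁, and define r₁(λ) = (2d₁ − 2p₂)/(4d₁) + (p₂/(4d₁))λ² and r₂(λ) = −1/2 − (p₂/(2d₂))λ. Then for real numbers t₁, t₂ there exists λ > 0 with r₁(λ) = t₁ and r₂(λ) = t₂ if and only if t₂ < −1/2 and t₁ = (d₂²/(d₁p₂))t₂² + (d₂²/(d₁p₂))t₂ + (p₂(2d₁ − 2p₂) + d₂²)/(4d₁p₂). -/
theorem stmt_6 (d₁ d₂ p₂ : ℝ) (hd₁ : 0 < d₁) (hd₂ : 0 < d₂)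
    (hp₂ : 0 < p₂) (hp₂d : p₂ < d₁)
    (r₁ r₂ : ℝ → ℝ)
    (hr₁ : ∀ l : ℝ, r₁ l = (2*d₁ - 2*p₂)/(4*d₁) + (p₂/(4*d₁))*l^2)
    (hr₂ : ∀ l : ℝ, r₂ l = -1/2 - (p₂/(2*d₂))*l)
    (t₁ t₂ : ℝ) :
    (∃ l : ℝ, 0 < l ∧ r₁ l = t₁ ∧ r₂ l = t₂) ↔
      (t₂ < -1/2 ∧
        t₁ = (d₂^2/(d₁*p₂))*t₂^2 + (d₂^2/(d₁*p₂))*t₂ +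
          (p₂*(2*d₁ - 2*p₂) + d₂^2)/(4*d₁*p₂)) := by
  have hd₁' := hd₁.ne'
  have hd₂' := hd₂.ne'
  have hp₂' := hp₂.ne'
  constructor
  · rintro ⟨l, hl, h1, h2⟩
    rw [hr₁] at h1; rw [hr₂] at h2
    constructor
    · rw [← h2]
      have : 0 < (p₂/(2*d₂))*l := by positivity
      linarith
    · have hlval : l = -(d₂/p₂)*(2*t₂+1) := by
        field_simp at h2 ⊢
        nlinarith [h2]
      subst hlval h1
      field_simp
      ring
  · rintro ⟨h2, h1⟩
    refine ⟨-(d₂/p₂)*(2*t₂+1), ?_, ?_, ?_⟩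
    · have : 2*t₂+1 < 0 := by linarith
      have hdp : 0 < d₂/p₂ := by positivity
      nlinarith
    · rw [hr₁, h1]
      field_simp
      ring
    · rw [hr₂]
      field_simp
      ring
end

section
/- Let d₁, d₂, p₂ be real numbers with d₁ > 0, d₂ > 0, 0 < p₂ < d₁, and define r₁(λ) = (2d₁ − 2p₂)/(4d₁) + (p₂/(4d₁))λ² and r₂(λ) = −1/2 − (p₂/(2d₂))λ. Then: (i) for real numbers t₁, t₂ there exist c > 0 and λ > 0 with r₁(λ) = c·t₁ and r₂(λ) = c·t₂ if and only if t₁ > 0, t₂ < 0, and t₁/t₂ ≤ d₂²/(d₁p₂) − (d₂/d₁)·√(d₂²/p₂² + (2d₁ − 2p₂)/p₂); and (ii) there exist two such pairs (c, λ), (c′, λ′) with c ≠ c′ if and only if, in addition, −(d₁ − p₂)/d₁ < t₁/t₂ < d₂²/(d₁p₂) − (d₂/d₁)·√(d₂²/p₂² + (2d₁ − 2p₂)/p₂). -/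
/-!
Since `r₁ > 0` and `r₂ < 0` for `λ > 0`, a solution `(c, λ)` exists exactly when `t₁ > 0`, `t₂ < 0`
and `r₁(λ) = τ r₂(λ)` for `τ = t₁ / t₂`. The latter is the quadratic equation
`(p₂/4d₁) λ² + τ (p₂/2d₂) λ + ((d₁ - p₂)/2d₁ + τ/2) = 0` in `λ`. Its roots have positive sum, so it has a
positive root iff its discriminant is nonnegative, and two distinct positive roots iff moreover the
discriminant is positive and the constant term is positive. As a function of `τ < 0` the discriminant is a
positive multiple of `(K - τ)² - w²`, whose negative root is the bound `K - w` of the statement. Distinct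
roots give distinct `c = r₂(λ) / t₂`, because `r₂` is injective.
-/

theorem exists_pos_quadratic_root_iff {a b c : ℝ} (ha : 0 < a) (hb : b < 0) :
    (∃ x, 0 < x ∧ a * (x * x) + b * x + c = 0) ↔ 0 ≤ discrim a b c := by
  constructor
  · rintro ⟨x, -, hx⟩
    rw [quadratic_eq_zero_iff_discrim_eq_sq ha.ne' x] at hx
    exact hx ▸ sq_nonneg _
  · intro hd
    have hs := Real.sqrt_nonneg (discrim a b c)
    refine ⟨(-b + √(discrim a b c)) / (2 * a), div_pos (by linarith) (by linarith), ?_⟩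
    exact (quadratic_eq_zero_iff ha.ne' (Real.mul_self_sqrt hd).symm _).2 (Or.inl rfl)

theorem exists_two_pos_quadratic_roots_iff {a b c : ℝ} (ha : 0 < a) (hb : b < 0) :
    (∃ x y, 0 < x ∧ 0 < y ∧ x ≠ y ∧ a * (x * x) + b * x + c = 0 ∧ a * (y * y) + b * y + c = 0) ↔
      0 < discrim a b c ∧ 0 < c := by
  constructor
  · rintro ⟨x, y, hx, hy, hxy, hrx, hry⟩
    have hsum : a * (x + y) + b = 0 := by
      have : (x - y) * (a * (x + y) + b) = 0 := by linear_combination hrx - hry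
      exact (mul_eq_zero.1 this).resolve_left (sub_ne_zero.2 hxy)
    have hdiscrim : discrim a b c = (a * (x - y)) ^ 2 := by
      rw [discrim]
      linear_combination (b - a * (x + y) + 4 * a * x) * hsum - 4 * a * hrx
    have hprod : c = a * x * y := by linear_combination hrx - x * hsum
    have hne : a * (x - y) ≠ 0 := mul_ne_zero ha.ne' (sub_ne_zero.2 hxy)
    exact ⟨hdiscrim ▸ by positivity, hprod ▸ by positivity⟩
  · rintro ⟨hd, hc⟩
    set s := √(discrim a b c)
    have hs : 0 < s := Real.sqrt_pos.2 hd
    have hsb : s < -b := (Real.sqrt_lt' (by linarith)).2 (by rw [discrim] at *; nlinarith)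
    have hroot := quadratic_eq_zero_iff ha.ne' (Real.mul_self_sqrt hd.le).symm
    refine ⟨(-b + s) / (2 * a), (-b - s) / (2 * a), div_pos (by linarith) (by linarith),
      div_pos (by linarith) (by linarith), ?_, (hroot _).2 (Or.inl rfl), (hroot _).2 (Or.inr rfl)⟩
    rw [Ne, div_left_inj' (by positivity)]
    linarith

theorem sq_sub_sq_nonneg_iff {K w τ : ℝ} (hw : 0 ≤ w) (hτ : τ ≤ K) :
    0 ≤ (K - τ) ^ 2 - w ^ 2 ↔ τ ≤ K - w := by
  rw [sub_nonneg, pow_le_pow_iff_left₀ hw (sub_nonneg.2 hτ) two_ne_zero, le_sub_comm]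

theorem sq_sub_sq_pos_iff {K w τ : ℝ} (hw : 0 ≤ w) (hτ : τ ≤ K) :
    0 < (K - τ) ^ 2 - w ^ 2 ↔ τ < K - w := by
  rw [sub_pos, pow_lt_pow_iff_left₀ hw (sub_nonneg.2 hτ) two_ne_zero, lt_sub_comm]

theorem exists_pos_mul_eq_pair_iff {u₁ u₂ t₁ t₂ : ℝ} (hu₁ : 0 < u₁) (hu₂ : u₂ < 0) :
    (∃ c, 0 < c ∧ u₁ = c * t₁ ∧ u₂ = c * t₂) ↔ 0 < t₁ ∧ t₂ < 0 ∧ u₁ = t₁ / t₂ * u₂ := by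
  constructor
  · rintro ⟨c, hc, rfl, rfl⟩
    have ht₂ : t₂ < 0 := neg_of_mul_neg_right hu₂ hc.le
    refine ⟨pos_of_mul_pos_right hu₁ hc.le, ht₂, ?_⟩
    field_simp [ht₂.ne]
  · rintro ⟨ht₁, ht₂, h⟩
    refine ⟨u₂ / t₂, div_pos_of_neg_of_neg hu₂ ht₂, by rw [h]; ring, ?_⟩
    exact (div_mul_cancel₀ _ ht₂.ne).symm

section Curve

variable {f g : ℝ → ℝ} {t₁ t₂ : ℝ}

theorem exists_curve_point_pos_mul_iff (hf : ∀ l, 0 < l → 0 < f l) (hg : ∀ l, 0 < l → g l < 0) :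
    (∃ c l, 0 < c ∧ 0 < l ∧ f l = c * t₁ ∧ g l = c * t₂) ↔
      0 < t₁ ∧ t₂ < 0 ∧ ∃ l, 0 < l ∧ f l = t₁ / t₂ * g l := by
  constructor
  · rintro ⟨c, l, hc, hl, h₁, h₂⟩
    obtain ⟨ht₁, ht₂, h⟩ := (exists_pos_mul_eq_pair_iff (hf l hl) (hg l hl)).1 ⟨c, hc, h₁, h₂⟩
    exact ⟨ht₁, ht₂, l, hl, h⟩
  · rintro ⟨ht₁, ht₂, l, hl, h⟩
    obtain ⟨c, hc, h₁, h₂⟩ := (exists_pos_mul_eq_pair_iff (hf l hl) (hg l hl)).2 ⟨ht₁, ht₂, h⟩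
    exact ⟨c, l, hc, hl, h₁, h₂⟩

theorem exists_two_curve_points_pos_mul_iff (hf : ∀ l, 0 < l → 0 < f l)
    (hg : ∀ l, 0 < l → g l < 0) (hg_inj : Set.InjOn g (Set.Ioi 0)) :
    (∃ c l c' l', 0 < c ∧ 0 < c' ∧ 0 < l ∧ 0 < l' ∧ c ≠ c' ∧
        f l = c * t₁ ∧ g l = c * t₂ ∧ f l' = c' * t₁ ∧ g l' = c' * t₂) ↔
      0 < t₁ ∧ t₂ < 0 ∧ ∃ l l', 0 < l ∧ 0 < l' ∧ l ≠ l' ∧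
        f l = t₁ / t₂ * g l ∧ f l' = t₁ / t₂ * g l' := by
  constructor
  · rintro ⟨c, l, c', l', hc, hc', hl, hl', hcc', h₁, h₂, h₁', h₂'⟩
    obtain ⟨ht₁, ht₂, h⟩ := (exists_pos_mul_eq_pair_iff (hf l hl) (hg l hl)).1 ⟨c, hc, h₁, h₂⟩
    obtain ⟨-, -, h'⟩ := (exists_pos_mul_eq_pair_iff (hf l' hl') (hg l' hl')).1 ⟨c', hc', h₁', h₂'⟩
    refine ⟨ht₁, ht₂, l, l', hl, hl', ?_, h, h'⟩
    rintro rfl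
    exact hcc' (mul_right_cancel₀ ht₂.ne (h₂.symm.trans h₂'))
  · rintro ⟨ht₁, ht₂, l, l', hl, hl', hll', h, h'⟩
    obtain ⟨c, hc, h₁, h₂⟩ := (exists_pos_mul_eq_pair_iff (hf l hl) (hg l hl)).2 ⟨ht₁, ht₂, h⟩
    obtain ⟨c', hc', h₁', h₂'⟩ :=
      (exists_pos_mul_eq_pair_iff (hf l' hl') (hg l' hl')).2 ⟨ht₁, ht₂, h'⟩
    refine ⟨c, l, c', l', hc, hc', hl, hl', ?_, h₁, h₂, h₁', h₂'⟩
    rintro rfl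
    exact hll' (hg_inj hl hl' (h₂.trans h₂'.symm))

end Curve

section Ricci

variable {d₁ d₂ p₂ : ℝ}

theorem discrim_ricci_quadratic (hd₁ : 0 < d₁) (hd₂ : 0 < d₂) (hp₂ : 0 < p₂) (hp₂d : p₂ < d₁)
    (τ : ℝ) :
    discrim (p₂ / (4 * d₁)) (τ * (p₂ / (2 * d₂))) ((2 * d₁ - 2 * p₂) / (4 * d₁) + τ / 2) =
      (p₂ / (2 * d₂)) ^ 2 * ((d₂ ^ 2 / (d₁ * p₂) - τ) ^ 2 -
        ((d₂ / d₁) * √(d₂ ^ 2 / p₂ ^ 2 + (2 * d₁ - 2 * p₂) / p₂)) ^ 2) := by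
  have hS : 0 ≤ d₂ ^ 2 / p₂ ^ 2 + (2 * d₁ - 2 * p₂) / p₂ :=
    add_nonneg (by positivity) (div_nonneg (by linarith) hp₂.le)
  rw [mul_pow _ √_, Real.sq_sqrt hS, discrim]
  field_simp
  ring

theorem ricci_constant_term_pos_iff (hd₁ : 0 < d₁) (τ : ℝ) :
    0 < (2 * d₁ - 2 * p₂) / (4 * d₁) + τ / 2 ↔ -(d₁ - p₂) / d₁ < τ := by
  have h : (2 * d₁ - 2 * p₂) / (4 * d₁) + τ / 2 = (τ - -(d₁ - p₂) / d₁) / 2 := by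
    field_simp
    ring
  rw [h, div_pos_iff_of_pos_right two_pos, sub_pos]

end Ricci

theorem stmt_7 (d₁ d₂ p₂ : ℝ) (hd₁ : 0 < d₁) (hd₂ : 0 < d₂)
    (hp₂ : 0 < p₂) (hp₂d : p₂ < d₁)
    (r₁ r₂ : ℝ → ℝ)
    (hr₁ : ∀ l : ℝ, r₁ l = (2*d₁ - 2*p₂)/(4*d₁) + (p₂/(4*d₁))*l^2)
    (hr₂ : ∀ l : ℝ, r₂ l = -1/2 - (p₂/(2*d₂))*l)
    (t₁ t₂ : ℝ) :
    ((∃ c l : ℝ, 0 < c ∧ 0 < l ∧ r₁ l = c * t₁ ∧ r₂ l = c * t₂) ↔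
      (0 < t₁ ∧ t₂ < 0 ∧
        t₁/t₂ ≤ d₂^2/(d₁*p₂) -
          (d₂/d₁) * Real.sqrt (d₂^2/p₂^2 + (2*d₁ - 2*p₂)/p₂))) ∧
    ((∃ c l c' l' : ℝ, 0 < c ∧ 0 < c' ∧ 0 < l ∧ 0 < l' ∧ c ≠ c' ∧
        r₁ l = c * t₁ ∧ r₂ l = c * t₂ ∧ r₁ l' = c' * t₁ ∧ r₂ l' = c' * t₂) ↔
      (0 < t₁ ∧ t₂ < 0 ∧
        -(d₁ - p₂)/d₁ < t₁/t₂ ∧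
        t₁/t₂ < d₂^2/(d₁*p₂) -
          (d₂/d₁) * Real.sqrt (d₂^2/p₂^2 + (2*d₁ - 2*p₂)/p₂))) := by
  have hk : 0 < p₂ / (4 * d₁) := by positivity
  have hm : 0 < p₂ / (2 * d₂) := by positivity
  have hr₁_pos : ∀ l, 0 < l → 0 < r₁ l := fun l _ => by
    have : 0 < 2 * d₁ - 2 * p₂ := by linarith
    rw [hr₁]; positivity
  have hr₂_neg : ∀ l, 0 < l → r₂ l < 0 := fun l hl => by
    rw [hr₂]; nlinarith [mul_pos hm hl]
  have hr₂_inj : Set.InjOn r₂ (Set.Ioi 0) := fun l _ l' _ h => by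
    rw [hr₂, hr₂] at h
    exact mul_left_cancel₀ hm.ne' (by linarith)
  have hquadratic : ∀ l, r₁ l = t₁ / t₂ * r₂ l ↔ p₂ / (4 * d₁) * (l * l) +
      t₁ / t₂ * (p₂ / (2 * d₂)) * l + ((2 * d₁ - 2 * p₂) / (4 * d₁) + t₁ / t₂ / 2) = 0 := fun l => by
    rw [hr₁, hr₂]
    constructor <;> intro h <;> linear_combination h
  rw [exists_curve_point_pos_mul_iff hr₁_pos hr₂_neg,
    exists_two_curve_points_pos_mul_iff hr₁_pos hr₂_neg hr₂_inj]
  simp only [hquadratic]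
  constructor <;> refine and_congr_right fun ht₁ => and_congr_right fun ht₂ => ?_
  all_goals
    have hτ : t₁ / t₂ < 0 := div_neg_of_pos_of_neg ht₁ ht₂
    have hb : t₁ / t₂ * (p₂ / (2 * d₂)) < 0 := mul_neg_of_neg_of_pos hτ hm
    have hK : t₁ / t₂ ≤ d₂ ^ 2 / (d₁ * p₂) := hτ.le.trans (by positivity)
  · rw [exists_pos_quadratic_root_iff hk hb, discrim_ricci_quadratic hd₁ hd₂ hp₂ hp₂d,
      mul_nonneg_iff_of_pos_left (by positivity), sq_sub_sq_nonneg_iff (by positivity) hK]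
  · rw [exists_two_pos_quadratic_roots_iff hk hb, discrim_ricci_quadratic hd₁ hd₂ hp₂ hp₂d,
      mul_pos_iff_of_pos_left (by positivity), sq_sub_sq_pos_iff (by positivity) hK,
      ricci_constant_term_pos_iff hd₁, and_comm]
end

section
/- Let d₂ > 0 be a real number and define r₁(λ) = (1/4)λ² and r₂(λ) = −1/2 − (1/(2d₂))λ. Then for real numbers t₁, t₂ there exists λ > 0 with r₁(λ) = t₁ and r₂(λ) = t₂ if and only if t₂ < −1/2 and t₁ = d₂²t₂² + d₂²t₂ + d₂²/4. -/
theorem stmt_8 (d₂ : ℝ) (hd₂ : 0 < d₂)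
    (r₁ r₂ : ℝ → ℝ)
    (hr₁ : ∀ l : ℝ, r₁ l = (1/4)*l^2)
    (hr₂ : ∀ l : ℝ, r₂ l = -1/2 - (1/(2*d₂))*l)
    (t₁ t₂ : ℝ) :
    (∃ l : ℝ, 0 < l ∧ r₁ l = t₁ ∧ r₂ l = t₂) ↔
      (t₂ < -1/2 ∧ t₁ = d₂^2*t₂^2 + d₂^2*t₂ + d₂^2/4) := by
  have hd' : (2*d₂) ≠ 0 := by positivity
  constructor
  · rintro ⟨l, hl, h1, h2⟩
    rw [hr₁] at h1; rw [hr₂] at h2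
    have hl2 : l = d₂*(-2*t₂-1) := by field_simp at h2 ⊢; linarith
    constructor
    · nlinarith
    · subst hl2; rw [← h1]; ring
  · rintro ⟨h2, h1⟩
    refine ⟨d₂*(-2*t₂-1), by nlinarith, ?_, ?_⟩
    · rw [hr₁, h1]; ring
    · rw [hr₂]; field_simp; ring
end

section
/- Let d₂ > 0 be a real number and define r₁(λ) = (1/4)λ² and r₂(λ) = −1/2 − (1/(2d₂))λ. Then for real numbers t₁, t₂ there exist c > 0 and λ > 0 with r₁(λ) = c·t₁ and r₂(λ) = c·t₂ if and only if t₁ > 0 and t₂ < 0; moreover in that case the constant c is unique and equals (−(d₂²t₂ − t₁) + √(t₁² − 2d₂²t₁t₂))/(2d₂²t₂²). -/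
/-!
Solving the second equation for `λ` gives `λ = -d₂ (1 + 2 c t₂)`, which is positive exactly when
`1 + 2 c t₂ < 0`. Substituting into the first equation leaves a quadratic equation in `c` with
discriminant `t₁² - 2 d₂² t₁ t₂`, whose roots satisfy `d₂² t₂ (1 + 2 c t₂) = t₁ ± √(t₁² - 2 d₂² t₁ t₂)`.
When `t₁ > 0 > t₂` the square root exceeds `t₁`, so exactly the larger root gives `λ > 0`.
-/

open Real

namespace RicciTrivialSummand

variable {d t₁ t₂ c l : ℝ}

lemma pos_and_neg_of_pos_solution (hd : 0 < d) (hc : 0 < c) (hl : 0 < l)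
    (h₁ : 1/4 * l^2 = c * t₁) (h₂ : -1/2 - 1/(2*d) * l = c * t₂) : 0 < t₁ ∧ t₂ < 0 := by
  have : 0 < 1/(2*d) * l := by positivity
  constructor <;> nlinarith

lemma eq_iff_eq_neg_mul (hd : d ≠ 0) : -1/2 - 1/(2*d) * l = c * t₂ ↔ l = -d * (1 + 2*c*t₂) := by
  constructor <;> intro h
  · field_simp at h; linarith
  · subst h; field_simp; ring

lemma neg_mul_pos_iff (hd : 0 < d) : 0 < -d * (1 + 2*c*t₂) ↔ 1 + 2*c*t₂ < 0 := by
  rw [neg_mul, ← mul_neg, mul_pos_iff_of_pos_left hd, neg_pos]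

lemma quarter_sq_eq_iff :
    1/4 * (-d * (1 + 2*c*t₂))^2 = c * t₁ ↔
      d^2*t₂^2 * (c*c) + (d^2*t₂ - t₁) * c + d^2/4 = 0 := by
  rw [← sub_eq_zero]
  constructor <;> intro h <;> linear_combination h

lemma discrim_eq : discrim (d^2*t₂^2) (d^2*t₂ - t₁) (d^2/4) = t₁^2 - 2*d^2*t₁*t₂ := by
  unfold discrim; ring

lemma quadratic_eq_zero_iff_roots (hd : d ≠ 0) (ht₂ : t₂ ≠ 0) (hD : 0 ≤ t₁^2 - 2*d^2*t₁*t₂) :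
    d^2*t₂^2 * (c*c) + (d^2*t₂ - t₁) * c + d^2/4 = 0 ↔
      c = (-(d^2*t₂ - t₁) + √(t₁^2 - 2*d^2*t₁*t₂)) / (2*d^2*t₂^2) ∨
      c = (-(d^2*t₂ - t₁) - √(t₁^2 - 2*d^2*t₁*t₂)) / (2*d^2*t₂^2) := by
  have ha : d^2*t₂^2 ≠ 0 := by positivity
  rw [quadratic_eq_zero_iff ha (by rw [discrim_eq, mul_self_sqrt hD]), ← mul_assoc 2 (d^2)]

lemma sq_mul_one_add_root (hd : d ≠ 0) (ht₂ : t₂ ≠ 0) (s : ℝ) :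
    d^2*t₂ * (1 + 2*((-(d^2*t₂ - t₁) + s) / (2*d^2*t₂^2))*t₂) = t₁ + s := by
  field_simp; ring

lemma sq_lt_discrim (ht₁ : 0 < t₁) (ht₂ : t₂ < 0) (hd : d ≠ 0) :
    t₁^2 < t₁^2 - 2*d^2*t₁*t₂ := by
  have : 0 < d^2*t₁*(-t₂) := by have := neg_pos.2 ht₂; positivity
  linarith

lemma sq_mul_neg (hd : d ≠ 0) (ht₂ : t₂ < 0) : d^2*t₂ < 0 :=
  mul_neg_of_pos_of_neg (by positivity) ht₂

lemma exists_pos_solution (hd : 0 < d) (ht₁ : 0 < t₁) (ht₂ : t₂ < 0) :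
    ∃ c l, 0 < c ∧ 0 < l ∧ 1/4 * l^2 = c * t₁ ∧ -1/2 - 1/(2*d) * l = c * t₂ := by
  set c := (-(d^2*t₂ - t₁) + √(t₁^2 - 2*d^2*t₁*t₂)) / (2*d^2*t₂^2) with hc
  have hD := sq_lt_discrim ht₁ ht₂ hd.ne'
  have hq : d^2*t₂^2 * (c*c) + (d^2*t₂ - t₁) * c + d^2/4 = 0 :=
    (quadratic_eq_zero_iff_roots hd.ne' ht₂.ne ((sq_nonneg t₁).trans hD.le)).2 (Or.inl rfl)
  have hneg : 1 + 2*c*t₂ < 0 := by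
    have h := sq_mul_one_add_root (t₁ := t₁) hd.ne' ht₂.ne (√(t₁^2 - 2*d^2*t₁*t₂))
    rw [← hc] at h
    have hpos : 0 < d^2*t₂ * (1 + 2*c*t₂) := by
      rw [h]; linarith [sqrt_nonneg (t₁^2 - 2*d^2*t₁*t₂)]
    exact neg_of_mul_pos_right hpos (sq_mul_neg hd.ne' ht₂).le
  refine ⟨c, -d * (1 + 2*c*t₂), by nlinarith, (neg_mul_pos_iff hd).2 hneg,
    quarter_sq_eq_iff.2 hq, (eq_iff_eq_neg_mul hd.ne').2 rfl⟩

lemma eq_root_of_pos_solution (hd : 0 < d) (hc : 0 < c) (hl : 0 < l)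
    (h₁ : 1/4 * l^2 = c * t₁) (h₂ : -1/2 - 1/(2*d) * l = c * t₂) :
    c = (-(d^2*t₂ - t₁) + √(t₁^2 - 2*d^2*t₁*t₂)) / (2*d^2*t₂^2) := by
  obtain ⟨ht₁, ht₂⟩ := pos_and_neg_of_pos_solution hd hc hl h₁ h₂
  have hD := sq_lt_discrim ht₁ ht₂ hd.ne'
  rw [eq_iff_eq_neg_mul hd.ne'] at h₂
  subst h₂
  have hneg := (neg_mul_pos_iff hd).1 hl
  have hD₀ := (sq_nonneg t₁).trans hD.le
  rw [quarter_sq_eq_iff, quadratic_eq_zero_iff_roots hd.ne' ht₂.ne hD₀] at h₁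
  refine h₁.resolve_right fun h => ?_
  have h' := sq_mul_one_add_root (t₁ := t₁) hd.ne' ht₂.ne (-√(t₁^2 - 2*d^2*t₁*t₂))
  rw [← sub_eq_add_neg, ← h] at h'
  have : 0 < d^2*t₂ * (1 + 2*c*t₂) := mul_pos_of_neg_of_neg (sq_mul_neg hd.ne' ht₂) hneg
  linarith [(lt_sqrt ht₁.le).2 hD]

end RicciTrivialSummand

open RicciTrivialSummand in
theorem stmt_9 (d₂ : ℝ) (hd₂ : 0 < d₂)
    (r₁ r₂ : ℝ → ℝ)
    (hr₁ : ∀ l : ℝ, r₁ l = (1/4)*l^2)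
    (hr₂ : ∀ l : ℝ, r₂ l = -1/2 - (1/(2*d₂))*l)
    (t₁ t₂ : ℝ) :
    ((∃ c l : ℝ, 0 < c ∧ 0 < l ∧ r₁ l = c * t₁ ∧ r₂ l = c * t₂) ↔
      (0 < t₁ ∧ t₂ < 0)) ∧
    (∀ c l : ℝ, 0 < c → 0 < l → r₁ l = c * t₁ → r₂ l = c * t₂ →
      c = (-(d₂^2*t₂ - t₁) + Real.sqrt (t₁^2 - 2*d₂^2*t₁*t₂))/(2*d₂^2*t₂^2)) := by
  simp only [hr₁, hr₂]
  exact ⟨⟨fun ⟨_, _, hc, hl, h₁, h₂⟩ => pos_and_neg_of_pos_solution hd₂ hc hl h₁ h₂,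
      fun ⟨ht₁, ht₂⟩ => exists_pos_solution hd₂ ht₁ ht₂⟩,
    fun _ _ hc hl h₁ h₂ => eq_root_of_pos_solution hd₂ hc hl h₁ h₂⟩
end

section
/- Define, for real x > 0 and y > 0, R₁(x,y) = (9x²y² + y⁴)/(24x²y²) and R₂(x,y) = (−12x²y² − 2xy³)/(24x²y²). Then for real numbers t₁, t₂ there exist x > 0 and y > 0 with R₁(x,y) = t₁ and R₂(x,y) = t₂ if and only if t₂ < −1/2 and t₁ = 6t₂² + 6t₂ + 15/8. -/
theorem stmt_14 (t₁ t₂ : ℝ) :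
    (∃ x y : ℝ, 0 < x ∧ 0 < y ∧
        (9*x^2*y^2 + y^4)/(24*x^2*y^2) = t₁ ∧
        (-12*x^2*y^2 - 2*x*y^3)/(24*x^2*y^2) = t₂) ↔
      (t₂ < -1/2 ∧ t₁ = 6*t₂^2 + 6*t₂ + 15/8) := by
  constructor
  · rintro ⟨x, y, hx, hy, h1, h2⟩
    have hx' : x ≠ 0 := ne_of_gt hx
    have hy' : y ≠ 0 := ne_of_gt hy
    rw [div_eq_iff (by positivity)] at h1 h2
    constructor
    · nlinarith [sq_nonneg x, sq_nonneg y, mul_pos hx hy, mul_pos (mul_pos hx hx) (mul_pos hy hy), mul_pos (mul_pos hx hy) hy]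
    · have h3 : y = (-12*t₂ - 6) * x := by
        nlinarith [mul_pos (mul_pos hx hx) (mul_pos hy hy), sq_nonneg (x*y)]
      subst h3
      have ht : 0 < -12*t₂ - 6 := by nlinarith [hy, hx]
      have hx4 : 0 < x^4 := by positivity
      have hu2 : 0 < (-12*t₂ - 6)^2 := by positivity
      nlinarith [h1, mul_pos hx4 hu2, mul_pos (mul_pos hx4 hu2) hu2]
  · rintro ⟨ht2, ht1⟩
    have hy : (0:ℝ) < -12*t₂ - 6 := by linarith
    refine ⟨1, -12*t₂ - 6, one_pos, hy, ?_, ?_⟩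
    · rw [div_eq_iff (by positivity), ht1]; ring
    · rw [div_eq_iff (by positivity)]; ring
end

section
/- Define, for real x > 0 and y > 0, R₁(x,y) = (9x²y² + y⁴)/(24x²y²) and R₂(x,y) = (−12x²y² − 2xy³)/(24x²y²). Then for real numbers t₁, t₂ there exist c > 0, x > 0 and y > 0 with R₁(x,y) = c·t₁ and R₂(x,y) = c·t₂ if and only if t₁ > 0 and (−2 − √5)/3 ≤ t₂/t₁ < 0. -/
/-!
With `u = y / x` the two Ricci components become `(9 + u²)/24` and `-(6 + u)/12`, so `(t₁, t₂)` is
a positive multiple of them iff `t₁ > 0` and `t₂ / t₁` lies in the range of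
`u ↦ -2(6 + u)/(9 + u²)` on `u > 0`. That range is `[(-2 - √5)/3, 0)`: the minimum is attained at
`u = 3√5 - 6`, where `(2 + √5)(9 + u²) - 6(6 + u)` has a double root, and every value in between is
hit by solving the quadratic `r u² + 2u + 9r + 12 = 0`.
-/

namespace SO17G2

lemma exists_pos_mul_iff {a b t₁ t₂ : ℝ} (ha : 0 < a) :
    (∃ c, 0 < c ∧ a = c * t₁ ∧ b = c * t₂) ↔ 0 < t₁ ∧ t₂ / t₁ = b / a := by
  constructor
  · rintro ⟨c, hc, rfl, rfl⟩
    have ht₁ : 0 < t₁ := pos_of_mul_pos_right ha hc.le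
    exact ⟨ht₁, (mul_div_mul_left t₂ t₁ hc.ne').symm⟩
  · rintro ⟨ht₁, hr⟩
    refine ⟨a / t₁, div_pos ha ht₁, (div_mul_cancel₀ a ht₁.ne').symm, ?_⟩
    rw [div_mul_comm, hr, div_mul_cancel₀ b ha.ne']

lemma ricci₁_eq {x y : ℝ} (hx : x ≠ 0) (hy : y ≠ 0) :
    (9*x^2*y^2 + y^4)/(24*x^2*y^2) = (9 + (y/x)^2)/24 := by
  field_simp

lemma ricci₂_eq {x y : ℝ} (hx : x ≠ 0) (hy : y ≠ 0) :
    (-12*x^2*y^2 - 2*x*y^3)/(24*x^2*y^2) = -(6 + y/x)/12 := by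
  field_simp
  ring

noncomputable def ricciRatio (u : ℝ) : ℝ := -2 * (6 + u) / (9 + u^2)

lemma ricciRatio_eq_div (u : ℝ) : ricciRatio u = (-(6 + u)/12) / ((9 + u^2)/24) := by
  unfold ricciRatio
  field_simp
  ring

lemma ricciRatio_neg {u : ℝ} (hu : -6 < u) : ricciRatio u < 0 :=
  div_neg_of_neg_of_pos (by linarith) (by positivity)

lemma le_ricciRatio (u : ℝ) : (-2 - √5)/3 ≤ ricciRatio u := by
  have h5 : √5 ^ 2 = 5 := Real.sq_sqrt (by norm_num)
  have hsq : (2 + √5) * (9 + u^2) - 6 * (6 + u) = (2 + √5) * (u - (3 * √5 - 6))^2 := by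
    linear_combination (6 * u - 9 * √5 + 18) * h5
  have hnonneg : 0 ≤ (2 + √5) * (u - (3 * √5 - 6))^2 := by positivity
  rw [ricciRatio, le_div_iff₀ (by positivity)]
  linarith

lemma exists_ricciRatio_eq {r : ℝ} (hlow : (-2 - √5)/3 ≤ r) (hr : r < 0) :
    ∃ u, 0 < u ∧ ricciRatio u = r := by
  have h5 : √5 ^ 2 = 5 := Real.sq_sqrt (by norm_num)
  have hdisc : 0 ≤ 1 - 12*r - 9*r^2 := by
    have hupp : r ≤ (-2 + √5)/3 := by nlinarith [Real.sqrt_nonneg 5]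
    nlinarith [mul_nonneg (sub_nonneg.2 hlow) (sub_nonneg.2 hupp)]
  set d := √(1 - 12*r - 9*r^2)
  have hd0 : 0 ≤ d := Real.sqrt_nonneg _
  have hd : d^2 = 1 - 12*r - 9*r^2 := Real.sq_sqrt hdisc
  refine ⟨(-1 - d)/r, div_pos_of_neg_of_neg (by linarith) hr, ?_⟩
  rw [ricciRatio, div_eq_iff (by positivity)]
  field_simp [hr.ne]
  linear_combination -hd

end SO17G2

open SO17G2 in
theorem stmt_15 (t₁ t₂ : ℝ) :
    (∃ c x y : ℝ, 0 < c ∧ 0 < x ∧ 0 < y ∧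
        (9*x^2*y^2 + y^4)/(24*x^2*y^2) = c * t₁ ∧
        (-12*x^2*y^2 - 2*x*y^3)/(24*x^2*y^2) = c * t₂) ↔
      (0 < t₁ ∧ (-2 - Real.sqrt 5)/3 ≤ t₂/t₁ ∧ t₂/t₁ < 0) := by
  constructor
  · rintro ⟨c, x, y, hc, hx, hy, h₁, h₂⟩
    rw [ricci₁_eq hx.ne' hy.ne'] at h₁
    rw [ricci₂_eq hx.ne' hy.ne'] at h₂
    obtain ⟨ht₁, hr⟩ := (exists_pos_mul_iff (by positivity)).1 ⟨c, hc, h₁, h₂⟩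
    rw [hr, ← ricciRatio_eq_div]
    exact ⟨ht₁, le_ricciRatio _, ricciRatio_neg (by linarith [div_pos hy hx])⟩
  · rintro ⟨ht₁, hlow, hr⟩
    obtain ⟨u, hu, hru⟩ := exists_ricciRatio_eq hlow hr
    rw [ricciRatio_eq_div] at hru
    obtain ⟨c, hc, h₁, h₂⟩ := (exists_pos_mul_iff (by positivity)).2 ⟨ht₁, hru.symm⟩
    refine ⟨c, 1, u, hc, one_pos, hu, ?_, ?_⟩
    · rw [ricci₁_eq one_ne_zero hu.ne', div_one, ← h₁]
    · rw [ricci₂_eq one_ne_zero hu.ne', div_one, ← h₂]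
end

section
/- For all real numbers x, y, z with x > 0, y > 0 and xy − z² > 0, setting t₁ = (9x²y² − 18xyz² + y⁴ + 6y²z² + 18z⁴)/(24(xy − z²)²), t₂ = (−3x²(4y² − 3z²) − 2x(y³ − 12yz²) + 3y²z² − 6z⁴)/(24(xy − z²)²) and t₃ = −yz(3x + y)²/(24(xy − z²)²), one has 128t₁³ + t₁²(−768t₂² − 768t₂ − 432) + t₁(1152t₂² + 1536t₂t₃² + 1152t₂ + 1536t₃² + 432) − 432t₂² − 432t₂ − 768t₃⁴ − 288t₃² − 135 = 0. -/
theorem stmt_17 (x y z : ℝ) (hx : 0 < x) (hy : 0 < y) (hxyz : 0 < x*y - z^2)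
    (t₁ t₂ t₃ : ℝ)
    (ht₁ : t₁ = (9*x^2*y^2 - 18*x*y*z^2 + y^4 + 6*y^2*z^2 + 18*z^4)/(24*(x*y - z^2)^2))
    (ht₂ : t₂ = (-3*x^2*(4*y^2 - 3*z^2) - 2*x*(y^3 - 12*y*z^2) + 3*y^2*z^2 - 6*z^4)/(24*(x*y - z^2)^2))
    (ht₃ : t₃ = -(y*z*(3*x + y)^2)/(24*(x*y - z^2)^2)) :
    128*t₁^3 + t₁^2*(-768*t₂^2 - 768*t₂ - 432) +
      t₁*(1152*t₂^2 + 1536*t₂*t₃^2 + 1152*t₂ + 1536*t₃^2 + 432) -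
      432*t₂^2 - 432*t₂ - 768*t₃^4 - 288*t₃^2 - 135 = 0 := by
  have h : x*y - z^2 ≠ 0 := ne_of_gt hxyz
  subst ht₁ ht₂ ht₃
  field_simp
  ring
end
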